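/- Under Assumptions (A1), (A2), (A3) and the condition that E[XXᵀ] is positive definite, ζ_0 is the unique solution in ℝ^{k(p+1)} of the moment equation E[m(X,Y,ζ)] = 0; that is, E[m(X,Y,ζ_0)] = 0, and E[m(X,Y,ζ)] ≠ 0 for every ζ ≠ ζ_0. -/

import Mathlib

/-!
Conditionally on `X`, the law of `Y` has the continuous cdf `F_X`, hence no atoms, so
`E[ψ_τ(Y - Xᵀb) | X] = F_X(Xᵀb) - τ`; this vanishes at `b = β₀(τ_d)`, giving `E[m(X,Y,ζ₀)] = 0`.
Conversely, if `E[m(X,Y,ζ)] = 0` and `δ = β(τ_d) - β₀(τ_d)`, pairing the `d`-th block with `δ`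
gives `E[(F_X(Xᵀβ(τ_d)) - F_X(Xᵀβ₀(τ_d))) · Xᵀδ] = 0`. Since `F_X` is nondecreasing and strictly
increasing near `Xᵀβ₀(τ_d)` by (A3), the integrand is positive wherever `Xᵀδ ≠ 0`, so `Xᵀδ = 0`
a.s., i.e. `δᵀ E[XXᵀ] δ = E[(Xᵀδ)²] = 0`, and positive definiteness forces `δ = 0`.
-/

open MeasureTheory Filter Topology Matrix ProbabilityTheory Set

/-- The quantile score function `ψ_τ(u) = 1_{u<0} − τ` for `u ≠ 0`, `ψ_τ(0) = 0`. -/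
noncomputable def psi (τ u : ℝ) : ℝ :=
  if u = 0 then 0 else (if u < 0 then 1 else 0) - τ

/-- The quantile-regression estimating function `m(x,y,ζ)`. -/
noncomputable def mEst {p k : ℕ} (τs : Fin k → ℝ)
    (x : Fin (p+1) → ℝ) (y : ℝ) (ζ : Fin k → Fin (p+1) → ℝ) :
    Fin k → Fin (p+1) → ℝ :=
  fun d j => psi (τs d) (y - x ⬝ᵥ ζ d) * x j

lemma abs_psi_le (τ u : ℝ) : |psi τ u| ≤ 1 + |τ| := by
  unfold psi
  split_ifs
  · simp only [abs_zero]; positivity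
  · simpa using abs_sub (1 : ℝ) τ
  · simp

lemma measurable_psi (τ : ℝ) : Measurable (psi τ) :=
  Measurable.ite (measurableSet_singleton 0) measurable_const
    ((Measurable.ite measurableSet_Iio measurable_const measurable_const).sub measurable_const)

lemma integral_psi_sub {m : Measure ℝ} [IsProbabilityMeasure m] (τ : ℝ) {t : ℝ} (ht : m {t} = 0) :
    ∫ y, psi τ (y - t) ∂m = m.real (Iio t) - τ := by
  have hψ : (fun y => psi τ (y - t)) =ᵐ[m] fun y => (Iio t).indicator (1 : ℝ → ℝ) y - τ := by
    filter_upwards [measure_eq_zero_iff_ae_notMem.1 ht] with y hy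
    simp [psi, sub_eq_zero.not.2 hy, indicator_apply]
  have hind : Integrable ((Iio t).indicator (1 : ℝ → ℝ)) m :=
    (integrable_const 1).indicator measurableSet_Iio
  rw [integral_congr_ae hψ, integral_sub hind (integrable_const τ),
    integral_indicator_one measurableSet_Iio]
  simp

lemma closure_subset_of_forall_rat_mem {S U : Set ℝ} (hS : IsClosed S) (hU : IsOpen U)
    (h : ∀ q : ℚ, (q : ℝ) ∈ U → (q : ℝ) ∈ S) : closure U ⊆ S := by
  refine closure_minimal (fun x hx => ?_) hS
  refine closure_minimal ?_ hS (Rat.denseRange_cast.open_subset_closure_inter hU hx)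
  rintro _ ⟨hqU, q, rfl⟩
  exact h q hqU

lemma measureReal_Iio_eq_and_measure_singleton_eq_zero {m : Measure ℝ} [IsProbabilityMeasure m]
    {F : ℝ → ℝ} (hF : Continuous F) (hm : ∀ q : ℚ, m.real (Iic q) = F q) (t : ℝ) :
    m.real (Iio t) = F t ∧ m {t} = 0 := by
  have hle : F t ≤ m.real (Iio t) := by
    refine closure_subset_of_forall_rat_mem (isClosed_le hF continuous_const) isOpen_Iio
      (fun q hq => ?_) (by rw [closure_Iio]; exact self_mem_Iic)
    exact (hm q).symm.trans_le (measureReal_mono (Iic_subset_Iio.2 hq))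
  have hge : m.real (Iic t) ≤ F t := by
    refine closure_subset_of_forall_rat_mem (isClosed_le continuous_const hF) isOpen_Ioi
      (fun q hq => ?_) (by rw [closure_Ioi]; exact self_mem_Ici)
    exact (measureReal_mono (Iic_subset_Iic.2 (le_of_lt hq))).trans (hm q).le
  have hmono : m.real (Iio t) ≤ m.real (Iic t) := measureReal_mono Iio_subset_Iic_self
  refine ⟨by linarith, ?_⟩
  rw [← measureReal_eq_zero_iff, ← Iic_sdiff_Iio_same,
    measureReal_sdiff Iio_subset_Iic_self measurableSet_Iio]
  linarith

section ConditionalDistribution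

variable {Ω α : Type*} [MeasurableSpace Ω] [MeasurableSpace α] {μ : Measure Ω} [IsFiniteMeasure μ]
  {X : Ω → α} {Y : Ω → ℝ}

lemma ae_condDistrib_Iio_eq_and_singleton_eq_zero (hX : Measurable X) (hY : Measurable Y)
    {F : α → ℝ → ℝ}
    (hF : ∀ t : ℝ, (fun ω => F (X ω) t)
        =ᵐ[μ] μ[Set.indicator {ω | Y ω ≤ t} (fun _ => (1:ℝ)) |
              MeasurableSpace.comap X inferInstance])
    (hcont : ∀ᵐ ω ∂μ, Continuous (F (X ω))) :
    ∀ᵐ ω ∂μ, ∀ t, (condDistrib Y X μ (X ω)).real (Iio t) = F (X ω) t ∧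
      condDistrib Y X μ (X ω) {t} = 0 := by
  have hrat : ∀ᵐ ω ∂μ, ∀ q : ℚ, (condDistrib Y X μ (X ω)).real (Iic q) = F (X ω) q := by
    refine ae_all_iff.2 fun q => ?_
    filter_upwards [condDistrib_ae_eq_condExp hX hY (measurableSet_Iic (a := (q : ℝ))), hF q]
      with ω hcond hFq
    exact hcond.trans hFq.symm
  filter_upwards [hrat, hcont] with ω hq hc
  exact measureReal_Iio_eq_and_measure_singleton_eq_zero hc hq

lemma integral_psi_sub_mul_eq (hX : Measurable X) (hY : Measurable Y) (τ : ℝ) {T h : α → ℝ}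
    (hT : Measurable T) (hh : Measurable h) (hint : Integrable (fun ω => h (X ω)) μ)
    (hatom : ∀ᵐ ω ∂μ, condDistrib Y X μ (X ω) {T (X ω)} = 0) :
    ∫ ω, psi τ (Y ω - T (X ω)) * h (X ω) ∂μ =
      ∫ ω, ((condDistrib Y X μ (X ω)).real (Iio (T (X ω))) - τ) * h (X ω) ∂μ := by
  set f : α × ℝ → ℝ := fun z => psi τ (z.2 - T z.1) * h z.1
  have hf : Measurable f :=
    ((measurable_psi τ).comp (measurable_snd.sub (hT.comp measurable_fst))).mul
      (hh.comp measurable_fst)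
  have hXY : AEMeasurable (fun ω => (X ω, Y ω)) μ := (hX.prodMk hY).aemeasurable
  have hfint : Integrable f (μ.map X ⊗ₘ condDistrib Y X μ) := by
    rw [compProd_map_condDistrib hY.aemeasurable,
      integrable_map_measure hf.aestronglyMeasurable hXY]
    exact hint.bdd_mul ((measurable_psi τ).comp (hY.sub (hT.comp hX))).aestronglyMeasurable
      (ae_of_all _ fun ω => abs_psi_le τ _)
  calc ∫ ω, psi τ (Y ω - T (X ω)) * h (X ω) ∂μ
      = ∫ z, f z ∂(μ.map X ⊗ₘ condDistrib Y X μ) := by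
        rw [compProd_map_condDistrib hY.aemeasurable, integral_map hXY hf.aestronglyMeasurable]
    _ = ∫ x, ∫ y, f (x, y) ∂condDistrib Y X μ x ∂μ.map X := Measure.integral_compProd hfint
    _ = ∫ ω, ∫ y, f (X ω, y) ∂condDistrib Y X μ (X ω) ∂μ :=
        integral_map hX.aemeasurable
          (hf.aestronglyMeasurable.integral_condDistrib_map hY.aemeasurable)
    _ = _ := integral_congr_ae <| hatom.mono fun ω hω => by
        simp only [f]
        rw [integral_mul_const, integral_psi_sub τ hω]

end ConditionalDistribution

lemma measurable_dotProduct_const {ι : Type*} [Fintype ι] (v : ι → ℝ) :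
    Measurable fun x : ι → ℝ => x ⬝ᵥ v := by
  fun_prop

lemma integral_mEst_apply {Ω : Type*} [MeasurableSpace Ω] {μ : Measure Ω} [IsFiniteMeasure μ]
    {p k : ℕ} {X : Ω → Fin (p+1) → ℝ} {Y : Ω → ℝ} (hX : Measurable X) (hY : Measurable Y)
    (hXint : Integrable X μ) {F : (Fin (p+1) → ℝ) → ℝ → ℝ}
    (hcdf : ∀ᵐ ω ∂μ, ∀ t, (condDistrib Y X μ (X ω)).real (Iio t) = F (X ω) t ∧
      condDistrib Y X μ (X ω) {t} = 0)
    (τs : Fin k → ℝ) (ζ : Fin k → Fin (p+1) → ℝ) (d : Fin k) (j : Fin (p+1)) :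
    (∫ ω, mEst τs (X ω) (Y ω) ζ ∂μ) d j = ∫ ω, (F (X ω) (X ω ⬝ᵥ ζ d) - τs d) * X ω j ∂μ := by
  have hint : ∀ d j, Integrable (fun ω => mEst τs (X ω) (Y ω) ζ d j) μ := fun d j =>
    (hXint.eval j).bdd_mul
      ((measurable_psi _).comp
        (hY.sub ((measurable_dotProduct_const _).comp hX))).aestronglyMeasurable
      (ae_of_all _ fun ω => abs_psi_le _ _)
  rw [eval_integral (fun d => Integrable.of_eval (hint d)), eval_integral (hint d)]
  refine (integral_psi_sub_mul_eq (T := (· ⬝ᵥ ζ d)) (h := (· j)) hX hY (τs d)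
    (measurable_dotProduct_const _) (measurable_pi_apply j) (hXint.eval j)
    (hcdf.mono fun ω h => (h _).2)).trans ?_
  exact integral_congr_ae (hcdf.mono fun ω h => by simp only [(h _).1])

lemma Monotone.mul_sub_pos_of_eventually_deriv_pos {f : ℝ → ℝ} (hf : Monotone f) {t₀ : ℝ}
    (hpos : ∀ᶠ s in 𝓝 t₀, 0 < deriv f s) {t : ℝ} (ht : t ≠ t₀) :
    0 < (f t - f t₀) * (t - t₀) := by
  obtain ⟨ε, hε, hball⟩ := Metric.eventually_nhds_iff.1 hpos
  set I := Icc (t₀ - ε / 2) (t₀ + ε / 2)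
  have hI : ∀ s ∈ I, 0 < deriv f s := fun s hs =>
    hball (by rw [Real.dist_eq, abs_lt]; constructor <;> linarith [hs.1, hs.2])
  -- a positive derivative forces differentiability, hence continuity, on `I`
  have hstrict : StrictMonoOn f I :=
    strictMonoOn_of_deriv_pos (convex_Icc _ _)
      (fun s hs =>
        (differentiableAt_of_deriv_ne_zero (hI s hs).ne').continuousAt.continuousWithinAt)
      (fun s hs => hI s (interior_subset hs))
  have ht₀ : t₀ ∈ I := ⟨by linarith, by linarith⟩
  rcases ht.lt_or_gt with hlt | hgt
  · have hs : max t (t₀ - ε / 2) ∈ I := ⟨le_max_right _ _, max_le (by linarith) (by linarith)⟩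
    have h₁ := hstrict hs ht₀ (max_lt hlt (by linarith))
    have h₂ := hf (le_max_left t (t₀ - ε / 2))
    exact mul_pos_of_neg_of_neg (by linarith) (by linarith)
  · have hs : min t (t₀ + ε / 2) ∈ I := ⟨le_min (by linarith) (by linarith), min_le_right _ _⟩
    have h₁ := hstrict ht₀ hs (lt_min hgt (by linarith))
    have h₂ := hf (min_le_left t (t₀ + ε / 2))
    exact mul_pos (by linarith) (by linarith)

section Moments

variable {Ω ι : Type*} [MeasurableSpace Ω] {μ : Measure Ω} [Fintype ι] {X : Ω → ι → ℝ}

lemma integrable_mul_dotProduct {g : Ω → ℝ} (hg : ∀ j, Integrable (fun ω => g ω * X ω j) μ)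
    (v : ι → ℝ) : Integrable (fun ω => g ω * (X ω ⬝ᵥ v)) μ := by
  simp_rw [dotProduct, Finset.mul_sum, ← mul_assoc]
  exact integrable_finsetSum _ fun j _ => (hg j).mul_const (v j)

lemma integral_mul_dotProduct {g : Ω → ℝ} (hg : ∀ j, Integrable (fun ω => g ω * X ω j) μ)
    (v : ι → ℝ) : ∫ ω, g ω * (X ω ⬝ᵥ v) ∂μ = ∑ j, (∫ ω, g ω * X ω j ∂μ) * v j := by
  simp_rw [dotProduct, Finset.mul_sum, ← mul_assoc]
  rw [integral_finsetSum _ fun j _ => (hg j).mul_const (v j)]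
  simp_rw [integral_mul_const]

lemma dotProduct_gram_mulVec (hXX : ∀ j l, Integrable (fun ω => X ω j * X ω l) μ) (v : ι → ℝ) :
    v ⬝ᵥ (of fun j l => ∫ ω, X ω j * X ω l ∂μ) *ᵥ v = ∫ ω, (X ω ⬝ᵥ v) ^ 2 ∂μ := by
  have hXv : ∀ j, Integrable (fun ω => (X ω ⬝ᵥ v) * X ω j) μ := fun j => by
    simpa only [mul_comm] using integrable_mul_dotProduct (hXX j) v
  simp_rw [sq, integral_mul_dotProduct hXv, mul_comm (X _ ⬝ᵥ v),
    integral_mul_dotProduct (hXX _), dotProduct, mulVec, dotProduct, of_apply, mul_comm (v _)]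

lemma eq_zero_of_posDef_gram (hXX : ∀ j l, Integrable (fun ω => X ω j * X ω l) μ)
    (hgram : (of fun j l => ∫ ω, X ω j * X ω l ∂μ).PosDef) {v : ι → ℝ}
    (hv : ∀ᵐ ω ∂μ, X ω ⬝ᵥ v = 0) : v = 0 := by
  by_contra hne
  have hquad := hgram.dotProduct_mulVec_pos hne
  rw [star_trivial, dotProduct_gram_mulVec hXX,
    integral_eq_zero_of_ae (hv.mono fun ω h => by simp [h])] at hquad
  exact lt_irrefl 0 hquad

end Moments

lemma ae_eq_zero_of_integral_mul_eq_zero {Ω : Type*} [MeasurableSpace Ω] {μ : Measure Ω}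
    {g u : Ω → ℝ} (hint : Integrable (fun ω => g ω * u ω) μ)
    (hsign : ∀ᵐ ω ∂μ, u ω ≠ 0 → 0 < g ω * u ω) (h : ∫ ω, g ω * u ω ∂μ = 0) :
    ∀ᵐ ω ∂μ, u ω = 0 := by
  have hnonneg : 0 ≤ᵐ[μ] fun ω => g ω * u ω := hsign.mono fun ω hs => by
    by_cases hu : u ω = 0
    · simp [hu]
    · exact (hs hu).le
  filter_upwards [(integral_eq_zero_iff_of_nonneg_ae hnonneg hint).1 h, hsign] with ω h0 hs
  by_contra hu
  exact (hs hu).ne' h0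

lemma eq_of_forall_integral_cdf_sub_mul_eq_zero {Ω ι : Type*} [MeasurableSpace Ω]
    {μ : Measure Ω} [IsFiniteMeasure μ] [Fintype ι] {X : Ω → ι → ℝ} {Y : Ω → ℝ}
    (hX : Measurable X) (hX2 : MemLp X 2 μ)
    (hgram : (of fun j l => ∫ ω, X ω j * X ω l ∂μ).PosDef)
    {F : (ι → ℝ) → ℝ → ℝ} (hFmeas : Measurable (Function.uncurry F))
    (hcdf : ∀ᵐ ω ∂μ, ∀ t, (condDistrib Y X μ (X ω)).real (Iio t) = F (X ω) t)
    {τ : ℝ} {b b₀ : ι → ℝ} (hb₀ : ∀ᵐ ω ∂μ, F (X ω) (X ω ⬝ᵥ b₀) = τ)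
    (hpos : ∀ᵐ ω ∂μ, ∀ᶠ t in 𝓝 (X ω ⬝ᵥ b₀), 0 < deriv (F (X ω)) t)
    (h : ∀ j, ∫ ω, (F (X ω) (X ω ⬝ᵥ b) - τ) * X ω j ∂μ = 0) : b = b₀ := by
  set g : Ω → ℝ := fun ω => F (X ω) (X ω ⬝ᵥ b) - τ
  have hg_bdd : ∀ᵐ ω ∂μ, ‖g ω‖ ≤ 1 + |τ| := hcdf.mono fun ω hω => by
    have h01 : F (X ω) (X ω ⬝ᵥ b) ∈ Icc (0 : ℝ) 1 := hω _ ▸ ⟨measureReal_nonneg, measureReal_le_one⟩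
    rw [Real.norm_eq_abs, abs_le]
    constructor <;> linarith [h01.1, h01.2, neg_abs_le τ, le_abs_self τ]
  have hg : ∀ j, Integrable (fun ω => g ω * X ω j) μ := fun j =>
    (((hX2.integrable one_le_two).eval j).bdd_mul
      ((hFmeas.comp (hX.prodMk ((measurable_dotProduct_const b).comp hX))).sub
        measurable_const).aestronglyMeasurable hg_bdd)
  have hsign : ∀ᵐ ω ∂μ, X ω ⬝ᵥ (b - b₀) ≠ 0 → 0 < g ω * X ω ⬝ᵥ (b - b₀) := by
    filter_upwards [hcdf, hb₀, hpos] with ω hω hτ hderiv hne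
    have hmono : Monotone (F (X ω)) := fun s t hst => by
      simpa only [hω] using measureReal_mono (μ := condDistrib Y X μ (X ω)) (Iio_subset_Iio hst)
    rw [dotProduct_sub] at hne ⊢
    simpa only [g, ← hτ] using
      hmono.mul_sub_pos_of_eventually_deriv_pos hderiv (sub_ne_zero.1 hne)
  have hzero : ∀ᵐ ω ∂μ, X ω ⬝ᵥ (b - b₀) = 0 :=
    ae_eq_zero_of_integral_mul_eq_zero (integrable_mul_dotProduct hg _) hsign
      (by rw [integral_mul_dotProduct hg]; simp [g, h])
  exact sub_eq_zero.1 <| eq_zero_of_posDef_gram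
    (fun j l => (hX2.eval j).integrable_mul (hX2.eval l)) hgram hzero

theorem stmt3_general {p k : ℕ} (τs : Fin k → ℝ)
    {Ω : Type} [MeasurableSpace Ω] (μ : Measure Ω) [IsProbabilityMeasure μ]
    (X : Ω → (Fin (p+1) → ℝ)) (Y : Ω → ℝ)
    (hX : Measurable X) (hY : Measurable Y)
    (𝒳 : Set (Fin (p+1) → ℝ))
    -- (A1)
    (hXbdd : Bornology.IsBounded 𝒳)
    (hsupp : ∀ᵐ ω ∂μ, X ω ∈ 𝒳)
    -- F is the conditional cdf of Y given X
    (F : (Fin (p+1) → ℝ) → ℝ → ℝ)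
    (hFmeas : Measurable (Function.uncurry F))
    (hF : ∀ t : ℝ, (fun ω => F (X ω) t)
        =ᵐ[μ] μ[Set.indicator {ω | Y ω ≤ t} (fun _ => (1:ℝ)) |
              MeasurableSpace.comap X inferInstance])
    -- (A2)
    (hF2 : ∀ x ∈ 𝒳, ContDiff ℝ 2 (F x))
    -- the true parameter: F_x(xᵀβ₀(τ_d)) = τ_d on 𝒳
    (ζ0 : Fin k → Fin (p+1) → ℝ)
    (hζ0 : ∀ x ∈ 𝒳, ∀ d : Fin k, F x (x ⬝ᵥ ζ0 d) = τs d)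
    -- (A3): the conditional density is positive near the τ_d-th conditional quantile
    (hA3 : ∀ x ∈ 𝒳, ∀ d : Fin k, ∀ᶠ t in 𝓝 (x ⬝ᵥ ζ0 d), 0 < deriv (F x) t)
    -- E[XXᵀ] is positive definite
    (hXX : (Matrix.of fun j l : Fin (p+1) => ∫ ω, X ω j * X ω l ∂μ).PosDef) :
    -- ζ₀ is the unique solution of E[m(X,Y,ζ)] = 0
    (∫ ω, mEst τs (X ω) (Y ω) ζ0 ∂μ) = 0 ∧
    ∀ ζ : Fin k → Fin (p+1) → ℝ, ζ ≠ ζ0 →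
      (∫ ω, mEst τs (X ω) (Y ω) ζ ∂μ) ≠ 0 := by
  obtain ⟨R, hR⟩ := hXbdd.exists_norm_le
  have hX2 : MemLp X 2 μ := MemLp.of_bound hX.aestronglyMeasurable R (hsupp.mono fun ω => hR _)
  have hcdf := ae_condDistrib_Iio_eq_and_singleton_eq_zero hX hY hF
    (hsupp.mono fun ω hω => (hF2 _ hω).continuous)
  have hmoment := integral_mEst_apply hX hY (hX2.integrable one_le_two) hcdf τs
  refine ⟨?_, fun ζ hne hζ => hne (funext fun d => ?_)⟩
  · ext d j
    rw [hmoment]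
    exact integral_eq_zero_of_ae (hsupp.mono fun ω hω => by simp [hζ0 _ hω d])
  · refine eq_of_forall_integral_cdf_sub_mul_eq_zero hX hX2 hXX hFmeas
      (hcdf.mono fun ω h t => (h t).1) (hsupp.mono fun ω hω => hζ0 _ hω d)
      (hsupp.mono fun ω hω => hA3 _ hω d) fun j => ?_
    rw [← hmoment, hζ]
    rfl

theorem stmt3 {p k : ℕ} (τs : Fin k → ℝ) (hτ : ∀ d, τs d ∈ Set.Ioo (0:ℝ) 1)
    (hτmono : StrictMono τs)
    {Ω : Type} [MeasurableSpace Ω] (μ : Measure Ω) [IsProbabilityMeasure μ]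
    (X : Ω → (Fin (p+1) → ℝ)) (Y : Ω → ℝ)
    (hX : Measurable X) (hY : Measurable Y)
    (𝒳 : Set (Fin (p+1) → ℝ))
    -- (A1)
    (hXbdd : Bornology.IsBounded 𝒳)
    (hsupp : ∀ᵐ ω ∂μ, X ω ∈ 𝒳)
    (hone : ∀ x ∈ 𝒳, x 0 = 1)
    -- F is the conditional cdf of Y given X
    (F : (Fin (p+1) → ℝ) → ℝ → ℝ)
    (hFmeas : Measurable (Function.uncurry F))
    (hF : ∀ t : ℝ, (fun ω => F (X ω) t)
        =ᵐ[μ] μ[Set.indicator {ω | Y ω ≤ t} (fun _ => (1:ℝ)) |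
              MeasurableSpace.comap X inferInstance])
    -- (A2)
    (hF2 : ∀ x ∈ 𝒳, ContDiff ℝ 2 (F x))
    (hFbdd : ∀ K : Set ℝ, IsCompact K → ∃ C, ∀ x ∈ 𝒳, ∀ t ∈ K,
        |F x t| ≤ C ∧ |deriv (F x) t| ≤ C ∧ |deriv (deriv (F x)) t| ≤ C)
    -- the true parameter: F_x(xᵀβ₀(τ_d)) = τ_d on 𝒳
    (ζ0 : Fin k → Fin (p+1) → ℝ)
    (hζ0 : ∀ x ∈ 𝒳, ∀ d : Fin k, F x (x ⬝ᵥ ζ0 d) = τs d)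
    -- (A3): the conditional density is positive near the τ_d-th conditional quantile
    (hA3 : ∀ x ∈ 𝒳, ∀ d : Fin k, ∀ᶠ t in 𝓝 (x ⬝ᵥ ζ0 d), 0 < deriv (F x) t)
    -- E[XXᵀ] is positive definite
    (hXX : (Matrix.of fun j l : Fin (p+1) => ∫ ω, X ω j * X ω l ∂μ).PosDef) :
    -- ζ₀ is the unique solution of E[m(X,Y,ζ)] = 0
    (∫ ω, mEst τs (X ω) (Y ω) ζ0 ∂μ) = 0 ∧
    ∀ ζ : Fin k → Fin (p+1) → ℝ, ζ ≠ ζ0 →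
      (∫ ω, mEst τs (X ω) (Y ω) ζ ∂μ) ≠ 0 :=
  stmt3_general τs μ X Y hX hY 𝒳 hXbdd hsupp F hFmeas hF hF2 ζ0 hζ0 hA3 hXX
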